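/- arXiv:1701.07778 — 7 statements merged into one kernel-verified Lean document; each statement's English description precedes it below -/
import Mathlib

section
/- Any finite word of length n contains at most n+1 distinct palindromic factors (including the empty word). -/
/-! Appending a letter `a` to `w` creates at most one new palindromic factor, namely the longest
palindromic suffix of `w ++ [a]`: a shorter palindromic suffix `p` is a suffix, hence (both being
palindromes) a proper prefix, of the longest one, so `p` already occurs in `w`. Induction on the
length then gives the bound `n + 1`, the `1` accounting for the empty word. -/

namespace List

variable {A : Type*}

def palindromicFactors (u : List A) : Set (List A) :=
  {v | v <:+: u ∧ v.reverse = v}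

theorem palindromicFactors_finite (u : List A) : (palindromicFactors u).Finite :=
  u.sublists.finite_toSet.subset fun _ hv => mem_sublists.2 hv.1.sublist

theorem palindromicFactors_nil : palindromicFactors ([] : List A) = {[]} := by
  ext v
  simp +contextual [palindromicFactors]

theorem IsSuffix.isPrefix_of_reverse_eq {p q : List A} (h : p <:+ q) (hp : p.reverse = p)
    (hq : q.reverse = q) : p <+: q := by
  rwa [← reverse_prefix, hp, hq] at h

theorem isInfix_of_shorter_palindromic_suffix {p q w : List A} {a : A} (hp : p.reverse = p)
    (hq : q.reverse = q) (hqw : q <:+ w ++ [a]) (hpq : p <:+ q) (hlt : p.length < q.length) :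
    p <:+: w := by
  obtain ⟨t, rfl, htw⟩ : ∃ t, q = t ++ [a] ∧ t <:+ w :=
    (suffix_concat_iff.1 hqw).resolve_left (ne_nil_of_length_pos (by omega))
  obtain rfl | hpt := prefix_concat_iff.1 (hpq.isPrefix_of_reverse_eq hp hq)
  · exact absurd hlt (lt_irrefl _)
  · exact hpt.isInfix.trans htw.isInfix

theorem palindromicFactors_append_singleton_sdiff_subsingleton (w : List A) (a : A) :
    (palindromicFactors (w ++ [a]) \ palindromicFactors w).Subsingleton := by
  have suffix_of_mem {p} (hp : p ∈ palindromicFactors (w ++ [a]) \ palindromicFactors w) :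
      p <:+ w ++ [a] :=
    (infix_concat_iff.1 hp.1.1).resolve_right fun h => hp.2 ⟨h, hp.1.2⟩
  suffices ∀ p ∈ palindromicFactors (w ++ [a]) \ palindromicFactors w,
      ∀ q ∈ palindromicFactors (w ++ [a]) \ palindromicFactors w, p.length ≤ q.length → p = q by
    intro p hp q hq
    rcases le_total p.length q.length with h | h
    exacts [this p hp q hq h, (this q hq p hp h).symm]
  intro p hp q hq hle
  have hpq : p <:+ q := suffix_of_suffix_length_le (suffix_of_mem hp) (suffix_of_mem hq) hle
  refine hpq.eq_of_length (hle.antisymm (not_lt.1 fun hlt => hp.2 ⟨?_, hp.1.2⟩))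
  exact isInfix_of_shorter_palindromic_suffix hp.1.2 hq.1.2 (suffix_of_mem hq) hpq hlt

theorem ncard_palindromicFactors_append_singleton_le (w : List A) (a : A) :
    (palindromicFactors (w ++ [a])).ncard ≤ (palindromicFactors w).ncard + 1 :=
  calc (palindromicFactors (w ++ [a])).ncard
      ≤ (palindromicFactors (w ++ [a]) \ palindromicFactors w).ncard
        + (palindromicFactors w).ncard :=
        Set.ncard_le_ncard_sdiff_add_ncard _ _ (palindromicFactors_finite w)
    _ ≤ 1 + (palindromicFactors w).ncard := by
        gcongr
        exact (Set.ncard_le_one_iff (palindromicFactors_finite _).sdiff).2 fun hp hq =>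
          palindromicFactors_append_singleton_sdiff_subsingleton w a hp hq
    _ = (palindromicFactors w).ncard + 1 := add_comm _ _

end List

theorem palindromic_factors_le_length_succ {A : Type*} (u : List A) :
    {v : List A | v <:+: u ∧ v.reverse = v}.ncard ≤ u.length + 1 := by
  change u.palindromicFactors.ncard ≤ u.length + 1
  induction u using List.reverseRecOn with
  | nil => simp [List.palindromicFactors_nil]
  | append_singleton w a ih =>
    calc (w ++ [a]).palindromicFactors.ncard ≤ w.palindromicFactors.ncard + 1 :=
          List.ncard_palindromicFactors_append_singleton_le w a
      _ ≤ (w ++ [a]).length + 1 := by simp [ih]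
end

section
/- Every nonempty rich word w admits a factorization w = w_p w_{p-1} ⋯ w_2 w_1 into distinct nonempty palindromes such that, for each i, w_i is the longest palindromic suffix of w_p w_{p-1} ⋯ w_i. -/
/-- A word is rich if it has exactly `length + 1` distinct palindromic factors. -/
def Rich {A : Type*} (u : List A) : Prop :=
  {v : List A | v <:+: u ∧ v.reverse = v}.ncard = u.length + 1

/-- `UPSFactorization l w` : `l = [w_p, …, w_1]` is a factorization of `w` into distinct
nonempty palindromes such that each `w_i` is the longest palindromic suffix of `w_p ⋯ w_i`. -/
def UPSFactorization {A : Type*} (l : List (List A)) (w : List A) : Prop :=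
  l.flatten = w ∧ [] ∉ l ∧ l.Nodup ∧
  (∀ i : Fin l.length, (l.get i).reverse = l.get i) ∧
  ∀ i : Fin l.length, ∀ v : List A,
    v <:+ (l.take (i + 1)).flatten → v.reverse = v → v.length ≤ (l.get i).length

/-!
Peel off the longest palindromic suffix `s` of `w = u s`. The prefix `u` is rich, so by induction
it has a UPS-factorization, and appending `s` gives one of `w`: the new factor is distinct from
the old ones because in a rich word the longest palindromic suffix occurs only once, while every
old factor lies inside `u`.

Both facts about rich words come from one count: appending a letter to `u` creates at most one new
palindromic factor, namely the new longest palindromic suffix. Hence every word has at most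
`length + 1` palindromic factors, and in a rich word each letter does create a new one.
-/

open List

section

variable {A : Type*}

def palFactors (u : List A) : Set (List A) :=
  {v | v <:+: u ∧ v.reverse = v}

def IsLongestPalSuffix (s w : List A) : Prop :=
  s <:+ w ∧ s.reverse = s ∧ ∀ v, v <:+ w → v.reverse = v → v.length ≤ s.length

lemma rich_iff_ncard_palFactors {u : List A} : Rich u ↔ (palFactors u).ncard = u.length + 1 :=
  Iff.rfl

lemma palFactors_finite (u : List A) : (palFactors u).Finite :=
  u.sublists.finite_toSet.subset fun _ hv => mem_sublists.mpr hv.1.sublist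

lemma palFactors_nil : palFactors ([] : List A) = {[]} := by
  ext v
  simp +contextual [palFactors]

lemma exists_isLongestPalSuffix (w : List A) : ∃ s, IsLongestPalSuffix s w := by
  classical
  obtain ⟨s, hs, hmax⟩ := ((w.tails.filter fun v => v.reverse = v).toFinset).exists_max_image
    length ⟨[], by simp⟩
  simp only [mem_toFinset, mem_filter, mem_tails, decide_eq_true_eq] at hs hmax
  exact ⟨s, hs.1, hs.2, fun v hv hvpal => hmax v ⟨hv, hvpal⟩⟩

lemma IsLongestPalSuffix.ne_nil {s w : List A} (hs : IsLongestPalSuffix s w) (hw : w ≠ []) :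
    s ≠ [] := by
  obtain ⟨u, a, rfl⟩ := (eq_nil_or_concat' w).resolve_left hw
  have := hs.2.2 [a] (suffix_append u [a]) rfl
  rintro rfl
  simp at this

lemma palFactors_concat_subset {u s : List A} {a : A} (hs : IsLongestPalSuffix s (u ++ [a])) :
    palFactors (u ++ [a]) ⊆ insert s (palFactors u) := by
  obtain ⟨hsuf, hspal, hmax⟩ := hs
  rintro v ⟨hinf, hvpal⟩
  rcases infix_concat_iff.mp hinf with hvsuf | hvinf
  · rcases eq_or_ne v s with rfl | hne
    · exact Set.mem_insert v _
    have hvs : v <:+ s := suffix_of_suffix_length_le hvsuf hsuf (hmax v hvsuf hvpal)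
    have hlen : v.length < s.length :=
      (hmax v hvsuf hvpal).lt_of_ne fun h => hne (hvs.eq_of_length h)
    -- a proper suffix of the palindrome `s` that is itself a palindrome is a proper prefix of `s`
    have hvs' : v <+: s := by simpa [hvpal, hspal] using reverse_prefix.mpr hvs
    obtain ⟨t, rfl, ht⟩ := (suffix_concat_iff.mp hsuf).resolve_left (by rintro rfl; simp at hlen)
    have hvt : v <+: t := (prefix_concat_iff.mp hvs').resolve_left (by rintro rfl; simp at hlen)
    exact Set.mem_insert_of_mem _ ⟨hvt.isInfix.trans ht.isInfix, hvpal⟩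
  · exact Set.mem_insert_of_mem s ⟨hvinf, hvpal⟩

lemma ncard_palFactors_concat_le (u : List A) (a : A) :
    (palFactors (u ++ [a])).ncard ≤ (palFactors u).ncard + 1 := by
  obtain ⟨s, hs⟩ := exists_isLongestPalSuffix (u ++ [a])
  calc (palFactors (u ++ [a])).ncard
      ≤ (insert s (palFactors u)).ncard :=
        Set.ncard_le_ncard (palFactors_concat_subset hs) ((palFactors_finite u).insert s)
    _ ≤ (palFactors u).ncard + 1 := Set.ncard_insert_le s _

lemma ncard_palFactors_le (u : List A) : (palFactors u).ncard ≤ u.length + 1 := by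
  induction u using reverseRecOn with
  | nil => simp [palFactors_nil]
  | append_singleton u a ih =>
    simpa using (ncard_palFactors_concat_le u a).trans (Nat.add_le_add_right ih 1)

lemma Rich.of_concat {u : List A} {a : A} (h : Rich (u ++ [a])) : Rich u := by
  rw [rich_iff_ncard_palFactors, length_append, length_singleton] at h
  have := ncard_palFactors_concat_le u a
  have := ncard_palFactors_le u
  exact rich_iff_ncard_palFactors.mpr (by omega)

lemma Rich.of_prefix {u w : List A} (h : Rich w) (hp : u <+: w) : Rich u := by
  obtain ⟨t, rfl⟩ := hp
  induction t using reverseRecOn with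
  | nil => simpa using h
  | append_singleton t a ih => exact ih (by rw [← append_assoc] at h; exact h.of_concat)

/-- In a rich word the longest palindromic suffix is unioccurrent. -/
lemma Rich.not_isInfix_dropLast {s w : List A} (hw : Rich w) (hs : IsLongestPalSuffix s w)
    (hne : w ≠ []) : ¬ s <:+: w.dropLast := by
  obtain ⟨u, a, rfl⟩ := (eq_nil_or_concat' w).resolve_left hne
  rw [dropLast_concat]
  intro hsu
  have hsub : palFactors (u ++ [a]) ⊆ palFactors u :=
    Set.insert_eq_of_mem (s := palFactors u) ⟨hsu, hs.2.1⟩ ▸ palFactors_concat_subset hs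
  have := Set.ncard_le_ncard hsub (palFactors_finite u)
  have := ncard_palFactors_le u
  rw [rich_iff_ncard_palFactors, length_append, length_singleton] at hw
  omega

lemma UPSFactorization.nil : UPSFactorization ([] : List (List A)) [] :=
  ⟨rfl, not_mem_nil, nodup_nil, fun i => i.elim0, fun i => i.elim0⟩

lemma UPSFactorization.append {l : List (List A)} {u s : List A} (hl : UPSFactorization l u)
    (hs : IsLongestPalSuffix s (u ++ s)) (hsne : s ≠ []) (hsl : s ∉ l) :
    UPSFactorization (l ++ [s]) (u ++ s) := by
  obtain ⟨rfl, hnil, hnodup, hpal, hlong⟩ := hl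
  refine ⟨by simp, by simp [hnil, hsne.symm], concat_eq_append ▸ hnodup.concat hsl, ?_, ?_⟩
  · have hpal' : ∀ x ∈ l ++ [s], x.reverse = x :=
      forall_mem_append.mpr ⟨forall_mem_iff_get.mpr hpal, by simpa using hs.2.1⟩
    exact forall_mem_iff_get.mp hpal'
  · rintro ⟨i, hi⟩ v hv hvpal
    rw [length_append, length_singleton] at hi
    rcases (Nat.lt_succ_iff.mp hi).lt_or_eq with hi | rfl
    · simp only [get_eq_getElem, getElem_append_left hi]
      rw [take_append_of_le_length hi] at hv
      exact hlong ⟨i, hi⟩ v hv hvpal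
    · simp only [get_eq_getElem, getElem_concat_length]
      rw [take_of_length_le (by simp)] at hv
      exact hs.2.2 v (by simpa using hv) hvpal

theorem exists_UPSFactorization_of_rich (w : List A) (hw : Rich w) :
    ∃ l, UPSFactorization l w := by
  rcases eq_or_ne w [] with rfl | hne
  · exact ⟨[], UPSFactorization.nil⟩
  obtain ⟨s, hs⟩ := exists_isLongestPalSuffix w
  have hsne := hs.ne_nil hne
  obtain ⟨u, rfl⟩ := hs.1
  obtain ⟨l, hl⟩ := exists_UPSFactorization_of_rich u (hw.of_prefix (prefix_append u s))
  refine ⟨l ++ [s], hl.append hs hsne fun hsl => hw.not_isInfix_dropLast hs hne ?_⟩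
  rw [dropLast_append_of_ne_nil hsne]
  exact (hl.1 ▸ infix_of_mem_flatten hsl).trans (prefix_append _ _).isInfix
termination_by w.length
decreasing_by subst w; simp [length_pos_iff.mpr hsne]

end

theorem exists_UPSFactorization {A : Type*} (w : List A) (hw : Rich w) (hne : w ≠ []) :
    ∃ l : List (List A), l ≠ [] ∧ UPSFactorization l w := by
  obtain ⟨l, hl⟩ := exists_UPSFactorization_of_rich w hw
  exact ⟨l, by rintro rfl; exact hne hl.1.symm, hl⟩
end

section
/- Let q, n, t ∈ ℕ with q ≥ 2 be such that ∑_{i=1}^t i·q^⌈i/2⌉ ≥ n. Then the number p of palindromes in the UPS-factorization of any rich word of length n over a q-letter alphabet satisfies p ≤ ∑_{i=1}^t q^⌈i/2⌉. -/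
/-- A palindrome is determined by its first half, so there are at most
`q ^ ⌈i/2⌉` palindromes of length `i`. -/
lemma card_pal_le (q i : ℕ) (hq : 0 < q) (F : Finset (List (Fin q)))
    (h : ∀ v ∈ F, v.reverse = v ∧ v.length = i) :
    F.card ≤ q ^ ((i + 1) / 2) := by
  classical
  set k := (i + 1) / 2 with hk
  have pal_get : ∀ (u : List (Fin q)), u.reverse = u → ∀ j, (hj : j < u.length) →
      u[j] = u[u.length - 1 - j]'(by omega) := by
    intro u hu j hj
    have h2 : j < u.reverse.length := by simpa using hj
    have := List.getElem_reverse (l := u) (i := j) h2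
    simpa only [hu] using this
  have : F.card ≤ Fintype.card (Fin k → Fin q) := by
    apply Finset.card_le_card_of_injOn (fun v (j : Fin k) => v.getD j ⟨0, hq⟩)
    · intro v _; exact Finset.mem_univ _
    · intro v hv v' hv' hvv'
      obtain ⟨hvp, hvl⟩ := h v hv
      obtain ⟨hvp', hvl'⟩ := h v' hv'
      have same : ∀ j, j < k → ∀ (h1 : j < v.length) (h2 : j < v'.length), v[j] = v'[j] := by
        intro j hjk h1 h2
        have := congrFun hvv' ⟨j, hjk⟩
        simpa only [List.getD_eq_getElem v _ h1, List.getD_eq_getElem v' _ h2] using this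
      apply List.ext_getElem (by omega)
      intro j hj hj'
      by_cases hjk : j < k
      · exact same j hjk hj hj'
      · have hj2 : j < i := by omega
        have hlt : i - 1 - j < k := by omega
        rw [pal_get v hvp j hj, pal_get v' hvp' j hj']
        have : v.length - 1 - j = i - 1 - j := by omega
        have : v'.length - 1 - j = i - 1 - j := by omega
        simp only [hvl, hvl']
        exact same (i - 1 - j) hlt (by omega) (by omega)
  simpa using this

theorem UPS_length_bound (q n t : ℕ) (hq : 2 ≤ q)
    (ht : n ≤ ∑ i ∈ Finset.Icc 1 t, i * q ^ ((i + 1) / 2))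
    (w : List (Fin q)) (hw : Rich w) (hn : w.length = n)
    (l : List (List (Fin q))) (hl : UPSFactorization l w) :
    l.length ≤ ∑ i ∈ Finset.Icc 1 t, q ^ ((i + 1) / 2) := by
  classical
  obtain ⟨hflat, hne, hnd, hpal, -⟩ := hl
  by_contra hcon
  push_neg at hcon
  set m : ℕ → ℕ := fun i => q ^ ((i + 1) / 2) with hm
  set F : Finset (List (Fin q)) := l.toFinset with hF
  have hcardF : F.card = l.length := List.toFinset_card_of_nodup hnd
  have hpal' : ∀ v ∈ F, v.reverse = v := by
    intro v hv
    obtain ⟨i, hi⟩ := List.mem_iff_get.mp (List.mem_toFinset.mp hv)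
    rw [← hi]; exact hpal i
  have hne' : ∀ v ∈ F, 1 ≤ v.length := by
    intro v hv
    have : v ≠ [] := fun h => hne (h ▸ List.mem_toFinset.mp hv)
    have := List.length_pos_iff.mpr this
    omega
  have hsum : ∑ v ∈ F, v.length = n := by
    rw [List.sum_toFinset _ hnd, ← List.length_flatten, hflat, hn]
  set c : ℕ → ℕ := fun i => (F.filter fun v => v.length = i).card with hcdef
  have hc : ∀ i, c i ≤ m i := by
    intro i
    apply card_pal_le q i (by omega)
    intro v hv
    simp only [Finset.mem_filter] at hv
    exact ⟨hpal' v hv.1, hv.2⟩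
  set A : Finset (List (Fin q)) := F.filter (fun v => v.length ≤ t) with hAdef
  set B : Finset (List (Fin q)) := F.filter (fun v => ¬ v.length ≤ t) with hBdef
  have hAB : A.card + B.card = l.length := by
    rw [← hcardF]; exact Finset.card_filter_add_card_filter_not _
  have hsumAB : ∑ v ∈ A, v.length + ∑ v ∈ B, v.length = n := by
    rw [Finset.sum_filter_add_sum_filter_not]; exact hsum
  have hmaps : ∀ v ∈ A, v.length ∈ Finset.Icc 1 t := by
    intro v hv
    simp only [hAdef, Finset.mem_filter] at hv
    exact Finset.mem_Icc.mpr ⟨hne' v hv.1, hv.2⟩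
  have hfiber : ∀ i ∈ Finset.Icc 1 t,
      A.filter (fun v => v.length = i) = F.filter (fun v => v.length = i) := by
    intro i hi
    have hit : i ≤ t := (Finset.mem_Icc.mp hi).2
    rw [hAdef, Finset.filter_filter]
    apply Finset.filter_congr
    intro v _
    constructor
    · rintro ⟨-, h⟩; exact h
    · intro h; exact ⟨by omega, h⟩
  have hAsum : ∑ v ∈ A, v.length = ∑ i ∈ Finset.Icc 1 t, i * c i := by
    rw [← Finset.sum_fiberwise_of_maps_to hmaps (fun v => v.length)]
    apply Finset.sum_congr rfl
    intro i hi
    rw [hfiber i hi]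
    rw [Finset.sum_congr rfl (fun v hv => (Finset.mem_filter.mp hv).2)]
    simp [hcdef, mul_comm]
  have hAcard : A.card = ∑ i ∈ Finset.Icc 1 t, c i := by
    rw [Finset.card_eq_sum_card_fiberwise hmaps]
    exact Finset.sum_congr rfl (fun i hi => by rw [hfiber i hi])
  have hBsum : B.card * (t + 1) ≤ ∑ v ∈ B, v.length := by
    have := Finset.card_nsmul_le_sum B (fun v => v.length) (t + 1) ?_
    · simpa [smul_eq_mul] using this
    · intro v hv
      have h2 : ¬ v.length ≤ t := by simpa using (Finset.mem_filter.mp hv).2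
      show t + 1 ≤ v.length
      omega
  -- key termwise inequality summed
  have key : ∑ i ∈ Finset.Icc 1 t, (i * m i + (t + 1) * c i)
      ≤ ∑ i ∈ Finset.Icc 1 t, (i * c i + (t + 1) * m i) := by
    apply Finset.sum_le_sum
    intro i hi
    have hit : i ≤ t := (Finset.mem_Icc.mp hi).2
    obtain ⟨d, hd⟩ := Nat.exists_eq_add_of_le (hc i)
    rw [hd]
    have h1 : i * d ≤ (t + 1) * d := Nat.mul_le_mul_right d (by omega)
    nlinarith
  have expand1 : ∑ i ∈ Finset.Icc 1 t, (i * m i + (t + 1) * c i)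
      = (∑ i ∈ Finset.Icc 1 t, i * m i) + (t + 1) * ∑ i ∈ Finset.Icc 1 t, c i := by
    rw [Finset.sum_add_distrib, Finset.mul_sum]
  have expand2 : ∑ i ∈ Finset.Icc 1 t, (i * c i + (t + 1) * m i)
      = (∑ i ∈ Finset.Icc 1 t, i * c i) + (t + 1) * ∑ i ∈ Finset.Icc 1 t, m i := by
    rw [Finset.sum_add_distrib, Finset.mul_sum]
  rw [expand1, expand2] at key
  -- assemble the contradiction
  set N := ∑ i ∈ Finset.Icc 1 t, m i with hN
  set M := ∑ i ∈ Finset.Icc 1 t, i * m i with hM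
  set X := ∑ i ∈ Finset.Icc 1 t, i * c i with hX
  set a := ∑ i ∈ Finset.Icc 1 t, c i with ha
  -- key : M + (t+1)*a ≤ X + (t+1)*N
  have hp : N + 1 ≤ l.length := hcon
  have hmul : (t + 1) * (N + 1) ≤ (t + 1) * l.length := Nat.mul_le_mul_left _ hp
  have hcards : (t + 1) * l.length = (t + 1) * a + (t + 1) * B.card := by
    rw [← hAB, hAcard, Nat.mul_add]
  have hn1 : X + (t + 1) * B.card ≤ n := by
    calc X + (t + 1) * B.card = ∑ v ∈ A, v.length + (t + 1) * B.card := by rw [hAsum]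
    _ ≤ ∑ v ∈ A, v.length + ∑ v ∈ B, v.length := by
        have hBsum' : (t + 1) * B.card ≤ ∑ v ∈ B, v.length := by
          rw [Nat.mul_comm]; exact hBsum
        exact Nat.add_le_add_left hBsum' _
    _ = n := hsumAB
  have hn2 : n ≤ M := ht
  have hexp : (t + 1) * (N + 1) = (t + 1) * N + (t + 1) := by ring
  rw [hexp] at hmul
  linarith [key, hmul, hcards, hn1, hn2]
end

section
/- Let N ∈ ℕ and x ∈ ℝ with x > 1 and N(x−1) ≥ 2. Then N·x^N / (2(x−1)) ≤ ∑_{i=1}^N i·x^{i−1} ≤ N·x^N / (x−1). -/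
lemma geom_deriv_closed_form (N : ℕ) (x : ℝ) (hx : x ≠ 1) :
    ∑ i ∈ Finset.Icc 1 N, (i : ℝ) * x ^ (i - 1)
      = (x ^ N * ((N : ℝ) * (x - 1) - 1) + 1) / (x - 1) ^ 2 := by
  have h1 : x - 1 ≠ 0 := sub_ne_zero.mpr hx
  induction N with
  | zero => simp
  | succ n ih =>
    rw [Finset.sum_Icc_succ_top (Nat.le_add_left 1 n), ih]
    have : (n + 1) - 1 = n := rfl
    rw [this]
    push_cast
    field_simp
    ring

theorem geom_deriv_sum_bounds (N : ℕ) (x : ℝ) (hx : 1 < x) (hN : 2 ≤ (N : ℝ) * (x - 1)) :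
    (N : ℝ) * x ^ N / (2 * (x - 1)) ≤ ∑ i ∈ Finset.Icc 1 N, (i : ℝ) * x ^ (i - 1) ∧
    ∑ i ∈ Finset.Icc 1 N, (i : ℝ) * x ^ (i - 1) ≤ (N : ℝ) * x ^ N / (x - 1) := by
  have h1 : (0:ℝ) < x - 1 := by linarith
  have hxp : (1:ℝ) ≤ x ^ N := one_le_pow₀ (by linarith)
  rw [geom_deriv_closed_form N x (by linarith)]
  constructor
  · rw [div_le_div_iff₀ (by linarith) (by positivity)]
    nlinarith [mul_nonneg (sub_nonneg.mpr hxp) (sub_nonneg.mpr hN), sq_nonneg (x-1)]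
  · rw [div_le_div_iff₀ (by positivity) h1]
    nlinarith [sq_nonneg (x-1)]
end

section
/- There exists a constant c > 1 such that for every q ≥ 2 and every rich word w of length n ≥ 2 over a q-letter alphabet, the number p of palindromes in the UPS-factorization of w satisfies p ≤ c·n/ln n; explicitly one may take c = max{8 q^{3/2} ln q, 8·9^{3/2} ln 9}. -/
open Real

variable {α : Type*}

theorem List.eq_of_reverse_eq_self_of_getD_eq {u v : List α} (hu : u.reverse = u)
    (hv : v.reverse = v) (hlen : u.length = v.length) {K : ℕ} (hK : u.length ≤ 2 * K) (d : α)
    (h : ∀ j < K, u.getD j d = v.getD j d) : u = v := by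
  have first_half : ∀ j < K, u[j]? = v[j]? := by
    intro j hj
    have := h j hj
    rcases lt_or_ge j u.length with hju | hju
    · simpa [List.getD_eq_getElem?_getD, hju, hlen ▸ hju] using this
    · simp [hju, hlen ▸ hju]
  refine List.ext_getElem? fun i => ?_
  rcases lt_or_ge i K with hi | hi
  · exact first_half i hi
  rcases lt_or_ge i u.length with hiu | hiu
  · rw [← hu, ← hv, List.getElem?_reverse hiu, List.getElem?_reverse (hlen ▸ hiu), hlen]
    exact hlen ▸ first_half _ (by omega)
  · simp [hiu, hlen ▸ hiu]

theorem card_le_of_forall_reverse_eq_self [Fintype α] [Nonempty α] (s : Finset (List α))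
    (m : ℕ) (hs : ∀ v ∈ s, v.length < m ∧ v.reverse = v) :
    s.card ≤ m * Fintype.card α ^ (m / 2) := by
  inhabit α
  let encode (v : List α) : ℕ × (Fin (m / 2) → α) := (v.length, fun j => v.getD j default)
  calc s.card ≤ (Finset.range m ×ˢ (Finset.univ : Finset (Fin (m / 2) → α))).card := by
        refine Finset.card_le_card_of_injOn encode (fun v hv => ?_) fun u hu v hv huv => ?_
        · simpa [encode] using (hs v hv).1
        · obtain ⟨hlen, hget⟩ := Prod.ext_iff.mp huv
          exact List.eq_of_reverse_eq_self_of_getD_eq (hs u hu).2 (hs v hv).2 hlen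
            (by have := (hs u hu).1; omega) default fun j hj => congrFun hget ⟨j, hj⟩
    _ = m * Fintype.card α ^ (m / 2) := by simp

theorem List.length_filter_mul_le_length_flatten (l : List (List α)) (m : ℕ) :
    (l.filter (fun v => m ≤ v.length)).length * m ≤ l.flatten.length := by
  calc (l.filter (fun v => m ≤ v.length)).length * m
      = ((l.filter (fun v => m ≤ v.length)).map List.length).length • m := by simp
    _ ≤ ((l.filter (fun v => m ≤ v.length)).map List.length).sum :=
        List.card_nsmul_le_sum _ _ fun x hx => by
          obtain ⟨v, hv, rfl⟩ := List.mem_map.mp hx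
          simpa using (List.mem_filter.mp hv).2
    _ ≤ (l.map List.length).sum := (l.filter_sublist.map _).sum_le_sum (by simp)
    _ = l.flatten.length := List.length_flatten.symm

theorem List.length_le_length_flatten {l : List (List α)} (hl : [] ∉ l) :
    l.length ≤ l.flatten.length := by
  have hpos : ∀ v ∈ l, 1 ≤ v.length := fun v hv =>
    List.length_pos_iff.mpr fun h => hl (h ▸ hv)
  have hfilter : l.filter (fun v => 1 ≤ v.length) = l :=
    List.filter_eq_self.mpr fun v hv => decide_eq_true (hpos v hv)
  simpa [hfilter] using l.length_filter_mul_le_length_flatten 1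

theorem length_le_of_nodup_of_reverse_eq_self [Fintype α] [Nonempty α] {l : List (List α)}
    (hnd : l.Nodup) (hpal : ∀ v ∈ l, v.reverse = v) {m : ℕ} (hm : 0 < m) :
    (l.length : ℝ) ≤ m * Fintype.card α ^ (m / 2) + l.flatten.length / m := by
  classical
  have hshort : (l.filter (fun v => v.length < m)).length ≤ m * Fintype.card α ^ (m / 2) := by
    rw [← List.toFinset_card_of_nodup (hnd.filter _)]
    refine card_le_of_forall_reverse_eq_self _ m fun v hv => ?_
    simp only [List.mem_toFinset, List.mem_filter, decide_eq_true_eq] at hv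
    exact ⟨hv.2, hpal v hv.1⟩
  have hlong : ((l.filter (fun v => m ≤ v.length)).length : ℝ) ≤ l.flatten.length / m := by
    rw [le_div_iff₀ (by exact_mod_cast hm)]
    exact_mod_cast l.length_filter_mul_le_length_flatten m
  have hsplit := List.length_eq_length_filter_add (l := l) (fun v => v.length < m)
  simp only [← decide_not, not_lt] at hsplit
  rw [hsplit, Nat.cast_add]
  exact add_le_add (by exact_mod_cast hshort) hlong

theorem Real.sq_log_le_sqrt {x : ℝ} (hx : 0 < x) (h : 16 ≤ log x) : log x ^ 2 ≤ √x := by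
  rw [Real.le_sqrt (by positivity) hx.le]
  have hexp := Real.pow_div_factorial_le_exp (x := log x) (by linarith) 8
  rw [Real.exp_log hx, Nat.factorial] at hexp
  norm_num at hexp
  nlinarith [pow_le_pow_left₀ (by norm_num) h 4, pow_nonneg (by linarith : (0 : ℝ) ≤ log x) 4]

theorem exists_mul_pow_add_div_le {q C n : ℝ} (hq : 2 ≤ q) (hC : 16 * log q ≤ C) (hn : 0 < n)
    (hCn : C < log n) (h16 : 16 ≤ log n) :
    ∃ m : ℕ, 0 < m ∧ m * q ^ (m / 2) + n / m ≤ C * n / log n := by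
  set L := log n
  set Q := log q
  have hQ : 0.69 ≤ Q := by
    linarith [Real.log_two_gt_d9, Real.log_le_log (by norm_num) hq]
  have hQ0 : 0 < Q := by linarith
  have hL0 : 0 < L := by linarith
  -- the largest `m` with `q ^ m ≤ n`
  set m := ⌊L / Q⌋₊
  have hmL : m * Q ≤ L := (le_div_iff₀ hQ0).mp (Nat.floor_le (by positivity))
  have hLm : L < (m + 1) * Q := (div_lt_iff₀ hQ0).mp (Nat.lt_floor_add_one _)
  have hm : 1 ≤ m := Nat.le_floor (by rw [Nat.cast_one, le_div_iff₀ hQ0]; linarith)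
  have hm0 : (0 : ℝ) < m := by exact_mod_cast hm
  have hpow : q ^ (m / 2) ≤ √n := by
    rw [Real.le_sqrt (by positivity) hn.le, ← pow_mul]
    calc q ^ (m / 2 * 2) ≤ q ^ m := pow_le_pow_right₀ (by linarith) (Nat.div_mul_le_self m 2)
      _ ≤ n := (Real.pow_le_iff_le_log (by linarith) hn).mpr hmL
  have hsmall : m * q ^ (m / 2) ≤ (C - 2 * Q) * n / L := by
    have hsq := Real.sq_log_le_sqrt hn h16
    have hn_sq := Real.mul_self_sqrt hn.le
    have hCQ : 1 ≤ (C - 2 * Q) * Q := by nlinarith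
    calc m * q ^ (m / 2) ≤ L / Q * √n :=
          mul_le_mul ((le_div_iff₀ hQ0).mpr hmL) hpow (by positivity) (by positivity)
      _ ≤ (C - 2 * Q) * n / L := by
          rw [div_mul_eq_mul_div, div_le_div_iff₀ hQ0 hL0]
          nlinarith [Real.sqrt_nonneg n, mul_le_mul_of_nonneg_right hsq (Real.sqrt_nonneg n)]
  have hlarge : n / m ≤ 2 * Q * n / L := by
    rw [div_le_div_iff₀ hm0 hL0]
    have : (1 : ℝ) ≤ m := by exact_mod_cast hm
    nlinarith
  refine ⟨m, hm, ?_⟩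
  calc m * q ^ (m / 2) + n / m ≤ (C - 2 * Q) * n / L + 2 * Q * n / L :=
        add_le_add hsmall hlarge
    _ = C * n / L := by ring

theorem sixteen_mul_log_le_eight_mul_rpow_mul_log (x : ℝ) (hx : 2 ≤ x) :
    16 * log x ≤ 8 * x ^ ((3 : ℝ) / 2) * log x := by
  have hx32 : x ≤ x ^ ((3 : ℝ) / 2) := by
    simpa using rpow_le_rpow_of_exponent_le (by linarith) (by norm_num : (1 : ℝ) ≤ 3 / 2)
  nlinarith [Real.log_nonneg (by linarith : 1 ≤ x)]

theorem Real.one_le_log_nine : 1 ≤ log 9 := by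
  rw [Real.le_log_iff_exp_le (by norm_num)]
  linarith [Real.exp_one_lt_d9]

theorem UPSFactorization.reverse_eq_self {l : List (List α)} {w : List α}
    (h : UPSFactorization l w) {v : List α} (hv : v ∈ l) : v.reverse = v := by
  obtain ⟨i, rfl⟩ := List.mem_iff_get.mp hv
  exact h.2.2.2.1 i

theorem UPS_parts_le_const_mul_div_log (q : ℕ) (hq : 2 ≤ q) :
    ∃ c : ℝ, 1 < c ∧
      c = max (8 * (q : ℝ) ^ ((3 : ℝ) / 2) * Real.log q)
              (8 * (9 : ℝ) ^ ((3 : ℝ) / 2) * Real.log 9) ∧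
      ∀ w : List (Fin q), Rich w → 2 ≤ w.length →
        ∀ l : List (List (Fin q)), UPSFactorization l w →
          (l.length : ℝ) ≤ c * w.length / Real.log w.length := by
  have hq' : (2 : ℝ) ≤ q := by exact_mod_cast hq
  have : Nonempty (Fin q) := ⟨⟨0, by omega⟩⟩
  set c := max (8 * (q : ℝ) ^ ((3 : ℝ) / 2) * Real.log q)
    (8 * (9 : ℝ) ^ ((3 : ℝ) / 2) * Real.log 9) with hc
  have hcq : 16 * Real.log q ≤ c :=
    le_max_of_le_left (sixteen_mul_log_le_eight_mul_rpow_mul_log q hq')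
  have hc16 : 16 ≤ c := le_max_of_le_right <| by
    linarith [sixteen_mul_log_le_eight_mul_rpow_mul_log 9 (by norm_num), Real.one_le_log_nine]
  refine ⟨c, by linarith, hc, fun w _ hw l hl => ?_⟩
  have hpal : ∀ v ∈ l, v.reverse = v := fun _ => hl.reverse_eq_self
  obtain ⟨rfl, hnil, hnd, -⟩ := hl
  set n := l.flatten.length
  have hn : (2 : ℝ) ≤ n := by exact_mod_cast hw
  rcases le_or_gt (Real.log n) c with hsmall | hlarge
  · calc (l.length : ℝ) ≤ n := by exact_mod_cast List.length_le_length_flatten hnil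
      _ ≤ c * n / Real.log n := by
          rw [le_div_iff₀ (Real.log_pos (by linarith))]
          nlinarith
  · obtain ⟨m, hm, hbound⟩ :=
      exists_mul_pow_add_div_le hq' hcq (by linarith) hlarge (by linarith)
    calc (l.length : ℝ) ≤ m * q ^ (m / 2) + n / m := by
          simpa only [Fintype.card_fin] using length_le_of_nodup_of_reverse_eq_self hnd hpal hm
      _ ≤ _ := hbound
end

section
/- Suppose R : ℕ → ℕ satisfies R_n ≥ 1, the recursive bound R_n ≤ ∑_{p=1}^{κ_n} ∑_{n_1+⋯+n_p=n} R_{⌈n_1/2⌉}⋯R_{⌈n_p/2⌉} with κ_n = ⌈c n / ln n⌉ for some constant c > 1, and R_n ≤ K h^n for all n for some constants K ≥ 1, h > 1. Then limsup_{n→∞} (R_n)^{1/n} ≤ √h. -/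
/-!
Each factor satisfies `R ⌈m/2⌉ ≤ K h ^ ((m+1)/2) = K √h · √h ^ m`, so a composition of `n` into
`p ≤ κ` parts contributes at most `(K √h) ^ κ · √h ^ n`, and there are at most `C(n, p)` such
compositions. Hence `R n ≤ √h ^ n · (K √h) ^ κ ∑_{p ≤ κ} C(n, p) ≤ √h ^ n · (B n / κ) ^ κ` with
`B = e K √h`. Writing `x = κ / n`, the `n`-th root of `(B n / κ) ^ κ` is `exp (x log B - x log x)`,
which tends to `1` because `κ / n ≤ c / log n + 1 / n → 0`.
-/

open Filter Topology Finset

theorem Composition.zero_mem_boundaries {n : ℕ} (c : Composition n) : 0 ∈ c.boundaries :=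
  c.toCompositionAsSet.zero_mem

theorem Composition.boundaries_injective {n : ℕ} :
    Function.Injective (Composition.boundaries : Composition n → Finset (Fin (n + 1))) :=
  fun _ _ h => (compositionEquiv n).injective (CompositionAsSet.ext h)

theorem Composition.card_filter_length_eq_le_choose (n p : ℕ) :
    #{c : Composition n | c.length = p} ≤ n.choose p := by
  have hcard : #((univ : Finset (Fin (n + 1))).erase 0) = n := by simp
  calc #{c : Composition n | c.length = p}
      ≤ #(powersetCard p ((univ : Finset (Fin (n + 1))).erase 0)) := by
        refine card_le_card_of_injOn (fun c => c.boundaries.erase 0) (fun c hc => ?_) ?_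
        · simp only [coe_filter, mem_univ, true_and, Set.mem_ofPred_eq] at hc
          rw [mem_coe, mem_powersetCard, card_erase_of_mem c.zero_mem_boundaries,
            c.card_boundaries_eq_succ_length, hc, Nat.add_sub_cancel]
          exact ⟨erase_subset_erase _ (subset_univ _), rfl⟩
        · intro c _ c' _ h
          apply Composition.boundaries_injective
          rw [← insert_erase c.zero_mem_boundaries, ← insert_erase c'.zero_mem_boundaries]
          exact congrArg (insert 0) h
    _ = n.choose p := by rw [card_powersetCard, hcard]

theorem card_filter_antidiagonalTuple_pos_le_choose (p n : ℕ) :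
    #{f ∈ Nat.antidiagonalTuple p n | ∀ i, 1 ≤ f i} ≤ n.choose p := by
  refine le_trans (card_le_card_of_surjOn (s := {c : Composition n | c.length = p})
    (fun c i => c.blocks.getD i 0) fun f hf => ?_) (Composition.card_filter_length_eq_le_choose n p)
  simp only [coe_filter, Nat.mem_antidiagonalTuple, Set.mem_ofPred_eq] at hf
  refine ⟨⟨List.ofFn f, fun {i} hi => ?_, by rw [List.sum_ofFn, hf.1]⟩, ?_, ?_⟩
  · obtain ⟨j, rfl⟩ := List.mem_ofFn.1 hi
    exact hf.2 j
  · simp [Composition.length]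
  · funext i
    simp

theorem sum_range_choose_le_exp_one_mul_div_pow {m N : ℕ} (hm : 0 < m) (hmN : m ≤ N) :
    ∑ k ∈ range (m + 1), (N.choose k : ℝ) ≤ (Real.exp 1 * N / m) ^ m := by
  have hN : (0 : ℝ) < N := by exact_mod_cast hm.trans_le hmN
  set t : ℝ := m / N
  have hNt : N * t = m := mul_div_cancel₀ _ hN.ne'
  have ht0 : 0 < t := div_pos (by exact_mod_cast hm) hN
  have ht1 : t ≤ 1 := div_le_one_of_le₀ (by exact_mod_cast hmN) (Nat.cast_nonneg N)
  -- weighting the `k`-th term by `t ^ k ≥ t ^ m` and completing to the binomial sum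
  have key : t ^ m * ∑ k ∈ range (m + 1), (N.choose k : ℝ) ≤ Real.exp 1 ^ m :=
    calc t ^ m * ∑ k ∈ range (m + 1), (N.choose k : ℝ)
        ≤ ∑ k ∈ range (m + 1), t ^ k * 1 ^ (N - k) * N.choose k := by
          rw [mul_sum]
          refine sum_le_sum fun k hk => ?_
          rw [one_pow, mul_one]
          exact mul_le_mul_of_nonneg_right
            (pow_le_pow_of_le_one ht0.le ht1 (Nat.lt_succ_iff.1 (mem_range.1 hk))) (by positivity)
      _ ≤ ∑ k ∈ range (N + 1), t ^ k * 1 ^ (N - k) * N.choose k :=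
          sum_le_sum_of_subset_of_nonneg (range_subset_range.2 (by omega))
            fun _ _ _ => by positivity
      _ = (t + 1) ^ N := (add_pow t 1 N).symm
      _ ≤ Real.exp t ^ N := pow_le_pow_left₀ (by positivity) (Real.add_one_le_exp t) N
      _ = Real.exp 1 ^ m := by
          rw [← Real.exp_nat_mul, Real.exp_one_pow, hNt]
  have hpow : (Real.exp 1 * N / m) ^ m = Real.exp 1 ^ m / t ^ m := by
    rw [← div_pow, mul_div_assoc, ← hNt]
    field_simp
  rw [hpow, le_div_iff₀ (by positivity), mul_comm]
  exact key

section GrowthBound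

variable {a : ℕ → ℝ} {K h : ℝ}

theorem le_mul_sqrt_mul_sqrt_pow_of_le_mul_pow (hK : 0 ≤ K) (hh : 1 ≤ h)
    (ha : ∀ n, a n ≤ K * h ^ n) (m : ℕ) : a ((m + 1) / 2) ≤ K * √h * √h ^ m := by
  have hsqrt : 1 ≤ √h := Real.one_le_sqrt.2 hh
  calc a ((m + 1) / 2) ≤ K * √h ^ (2 * ((m + 1) / 2)) := by
        rw [pow_mul, Real.sq_sqrt (by linarith)]
        exact ha _
    _ ≤ K * √h ^ (m + 1) :=
        mul_le_mul_of_nonneg_left (pow_le_pow_right₀ hsqrt (Nat.mul_div_le _ _)) hK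
    _ = K * √h * √h ^ m := by ring

theorem prod_le_mul_sqrt_pow_mul_sqrt_pow (ha₀ : ∀ n, 0 ≤ a n) (hK : 0 ≤ K) (hh : 1 ≤ h)
    (ha : ∀ n, a n ≤ K * h ^ n) {p : ℕ} (f : Fin p → ℕ) :
    ∏ i, a ((f i + 1) / 2) ≤ (K * √h) ^ p * √h ^ (∑ i, f i) := by
  calc ∏ i, a ((f i + 1) / 2) ≤ ∏ i, (K * √h * √h ^ f i) :=
        prod_le_prod (fun i _ => ha₀ _)
          fun i _ => le_mul_sqrt_mul_sqrt_pow_of_le_mul_pow hK hh ha (f i)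
    _ = (K * √h) ^ p * √h ^ (∑ i, f i) := by
        rw [prod_mul_distrib, prod_const, card_univ, Fintype.card_fin, prod_pow_eq_pow_sum]

theorem sum_compositions_prod_le (ha₀ : ∀ n, 0 ≤ a n) (hK : 1 ≤ K) (hh : 1 ≤ h)
    (ha : ∀ n, a n ≤ K * h ^ n) {n κ : ℕ} (hκ : 0 < κ) (hκn : κ ≤ n) :
    ∑ p ∈ Icc 1 κ, ∑ f ∈ {f ∈ Nat.antidiagonalTuple p n | ∀ i, 1 ≤ f i},
        ∏ i, a ((f i + 1) / 2) ≤
      (K * √h * Real.exp 1 * n / κ) ^ κ * √h ^ n := by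
  have hC : 1 ≤ K * √h := one_le_mul_of_one_le_of_one_le hK (Real.one_le_sqrt.2 hh)
  have hterm : ∀ p ∈ Icc 1 κ, ∑ f ∈ {f ∈ Nat.antidiagonalTuple p n | ∀ i, 1 ≤ f i},
      ∏ i, a ((f i + 1) / 2) ≤ n.choose p * ((K * √h) ^ κ * √h ^ n) := by
    intro p hp
    calc ∑ f ∈ {f ∈ Nat.antidiagonalTuple p n | ∀ i, 1 ≤ f i}, ∏ i, a ((f i + 1) / 2)
        ≤ #{f ∈ Nat.antidiagonalTuple p n | ∀ i, 1 ≤ f i} • ((K * √h) ^ κ * √h ^ n) := by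
          refine sum_le_card_nsmul _ _ _ fun f hf => ?_
          rw [mem_filter, Nat.mem_antidiagonalTuple] at hf
          refine (prod_le_mul_sqrt_pow_mul_sqrt_pow ha₀ (by linarith) hh ha f).trans ?_
          rw [hf.1]
          gcongr
          exact (mem_Icc.1 hp).2
      _ ≤ n.choose p * ((K * √h) ^ κ * √h ^ n) := by
          rw [nsmul_eq_mul]
          gcongr
          exact_mod_cast card_filter_antidiagonalTuple_pos_le_choose p n
  calc _ ≤ ∑ p ∈ Icc 1 κ, n.choose p * ((K * √h) ^ κ * √h ^ n) := sum_le_sum hterm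
    _ = (∑ p ∈ Icc 1 κ, (n.choose p : ℝ)) * ((K * √h) ^ κ * √h ^ n) := (sum_mul ..).symm
    _ ≤ (∑ p ∈ range (κ + 1), (n.choose p : ℝ)) * ((K * √h) ^ κ * √h ^ n) := by
        gcongr
        intro p hp
        simp only [mem_Icc, mem_range] at hp ⊢
        omega
    _ ≤ (Real.exp 1 * n / κ) ^ κ * ((K * √h) ^ κ * √h ^ n) := by
        gcongr
        exact sum_range_choose_le_exp_one_mul_div_pow hκ hκn
    _ = (K * √h * Real.exp 1 * n / κ) ^ κ * √h ^ n := by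
        rw [← mul_assoc, ← mul_pow]
        ring

end GrowthBound

theorem tendsto_mul_div_pow_rpow_one_div {B : ℝ} (hB : 0 < B) {κ : ℕ → ℕ}
    (hκ : Tendsto (fun n => (κ n : ℝ) / n) atTop (𝓝 0)) (hκ₀ : ∀ᶠ n in atTop, 0 < κ n) :
    Tendsto (fun n : ℕ => ((B * n / κ n) ^ κ n) ^ (1 / (n : ℝ))) atTop (𝓝 1) := by
  set F : ℝ → ℝ := fun x => Real.exp (x * Real.log B - x * Real.log x)
  have hF : Tendsto (fun n => F ((κ n : ℝ) / n)) atTop (𝓝 1) := by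
    have hcont : Continuous F := by fun_prop
    simpa [F, Function.comp_def] using (hcont.tendsto 0).comp hκ
  refine hF.congr' ?_
  filter_upwards [hκ₀, eventually_gt_atTop 0] with n hκn hn
  have hx : (0 : ℝ) < κ n / n := by positivity
  have hBx : B * n / κ n = B / (κ n / n) := by field_simp
  rw [hBx, Real.rpow_def_of_pos (by positivity), Real.log_pow, Real.log_div hB.ne' hx.ne']
  simp only [F]
  congr 1
  field_simp

theorem limsup_rpow_one_div_le_of_le_mul_pow {u L : ℕ → ℝ} {r : ℝ} (hu : ∀ n, 0 ≤ u n)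
    (hr : 0 < r) (hL : Tendsto (fun n : ℕ => L n ^ (1 / (n : ℝ))) atTop (𝓝 1))
    (hle : ∀ᶠ n in atTop, u n ≤ L n * r ^ n) :
    limsup (fun n : ℕ => u n ^ (1 / (n : ℝ))) atTop ≤ r := by
  have hLr : Tendsto (fun n : ℕ => L n ^ (1 / (n : ℝ)) * r) atTop (𝓝 r) := by
    simpa using hL.mul_const r
  calc limsup (fun n : ℕ => u n ^ (1 / (n : ℝ))) atTop
      ≤ limsup (fun n : ℕ => L n ^ (1 / (n : ℝ)) * r) atTop := by
        refine limsup_le_limsup ?_ (isCoboundedUnder_le_of_le atTop (x := 0) fun n => ?_)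
          hLr.isBoundedUnder_le
        · filter_upwards [hle, eventually_ne_atTop 0] with n hn hn₀
          have hL₀ : 0 ≤ L n := nonneg_of_mul_nonneg_left ((hu n).trans hn) (by positivity)
          calc u n ^ (1 / (n : ℝ)) ≤ (L n * r ^ n) ^ (1 / (n : ℝ)) := by gcongr; exact hu n
            _ = L n ^ (1 / (n : ℝ)) * r := by
              rw [Real.mul_rpow hL₀ (by positivity), one_div,
                Real.pow_rpow_inv_natCast hr.le hn₀]
        · exact Real.rpow_nonneg (hu n) _
    _ = r := hLr.limsup_eq

theorem tendsto_natCeil_mul_div_log_div_atTop {c : ℝ} (hc : 0 ≤ c) :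
    Tendsto (fun n : ℕ => (⌈c * n / Real.log n⌉₊ : ℝ) / n) atTop (𝓝 0) := by
  have hlog : Tendsto (fun n : ℕ => Real.log n) atTop atTop :=
    Real.tendsto_log_atTop.comp tendsto_natCast_atTop_atTop
  have hupper : Tendsto (fun n : ℕ => c / Real.log n + 1 / n) atTop (𝓝 0) := by
    simpa using (tendsto_const_nhds.div_atTop hlog).add tendsto_one_div_atTop_nhds_zero_nat
  refine squeeze_zero' (Eventually.of_forall fun n => by positivity) ?_ hupper
  filter_upwards [eventually_gt_atTop 1] with n hn
  have hn' : (1 : ℝ) < n := by exact_mod_cast hn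
  have hlogpos : 0 < Real.log n := Real.log_pos hn'
  calc (⌈c * n / Real.log n⌉₊ : ℝ) / n ≤ (c * n / Real.log n + 1) / n := by
        gcongr
        exact (Nat.ceil_lt_add_one (by positivity)).le
    _ = c / Real.log n + 1 / n := by field_simp

theorem limsup_root_le_sqrt_general (R : ℕ → ℕ) (c : ℝ) (hc : 1 < c)
    (hrec : ∀ n : ℕ, 2 ≤ n →
      R n ≤ ∑ p ∈ Finset.Icc 1 ⌈c * n / Real.log n⌉₊,
        ∑ f ∈ (Finset.Nat.antidiagonalTuple p n).filter (fun f => ∀ i, 1 ≤ f i),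
          ∏ i, R ((f i + 1) / 2))
    (K h : ℝ) (hK : 1 ≤ K) (hh : 1 < h) (hbound : ∀ n : ℕ, (R n : ℝ) ≤ K * h ^ n) :
    Filter.limsup (fun n : ℕ => (R n : ℝ) ^ (1 / (n : ℝ))) Filter.atTop ≤ Real.sqrt h := by
  set κ : ℕ → ℕ := fun n => ⌈c * n / Real.log n⌉₊
  have hκ : Tendsto (fun n => (κ n : ℝ) / n) atTop (𝓝 0) :=
    tendsto_natCeil_mul_div_log_div_atTop (by linarith)
  have hκ₀ : ∀ᶠ n in atTop, 0 < κ n := by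
    filter_upwards [eventually_gt_atTop 1] with n hn
    exact Nat.ceil_pos.2 (div_pos (by positivity) (Real.log_pos (by exact_mod_cast hn)))
  have hκn : ∀ᶠ n in atTop, κ n ≤ n := by
    filter_upwards [hκ.eventually (ge_mem_nhds one_pos), eventually_gt_atTop 0] with n hle hn
    exact_mod_cast (div_le_one (by positivity)).1 hle
  refine limsup_rpow_one_div_le_of_le_mul_pow (fun n => Nat.cast_nonneg _)
    (Real.sqrt_pos.2 (by linarith))
    (tendsto_mul_div_pow_rpow_one_div (B := K * √h * Real.exp 1) (by positivity) hκ hκ₀) ?_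
  filter_upwards [eventually_ge_atTop 2, hκ₀, hκn] with n hn hκ₀n hκnn
  refine (Nat.cast_le.2 (hrec n hn)).trans ?_
  push_cast
  exact sum_compositions_prod_le (fun _ => Nat.cast_nonneg _) hK hh.le hbound hκ₀n hκnn

theorem limsup_root_le_sqrt (R : ℕ → ℕ) (hR : ∀ n, 1 ≤ R n) (c : ℝ) (hc : 1 < c)
    (hrec : ∀ n : ℕ, 2 ≤ n →
      R n ≤ ∑ p ∈ Finset.Icc 1 ⌈c * n / Real.log n⌉₊,
        ∑ f ∈ (Finset.Nat.antidiagonalTuple p n).filter (fun f => ∀ i, 1 ≤ f i),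
          ∏ i, R ((f i + 1) / 2))
    (K h : ℝ) (hK : 1 ≤ K) (hh : 1 < h) (hbound : ∀ n : ℕ, (R n : ℝ) ≤ K * h ^ n) :
    Filter.limsup (fun n : ℕ => (R n : ℝ) ^ (1 / (n : ℝ))) Filter.atTop ≤ Real.sqrt h :=
  limsup_root_le_sqrt_general R c hc hrec K h hK hh hbound
end

section
/- Suppose a sequence R : ℕ → ℕ with R_n ≥ 1 has the property: for every h > 1 and K ≥ 1, if R_n ≤ K h^n for all n, then lim_{n→∞} (R_n)^{1/n} ≤ √h (the limit existing by supermultiplicativity). If additionally R_n ≤ q^n for all n and some q ≥ 2, then lim_{n→∞} (R_n)^{1/n} = 1. -/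
theorem root_limit_eq_one (R : ℕ → ℕ) (hR : ∀ n, 1 ≤ R n) (L : ℝ)
    (hlim : Filter.Tendsto (fun n : ℕ => (R n : ℝ) ^ (1 / (n : ℝ))) Filter.atTop (nhds L))
    (hkey : ∀ h K : ℝ, 1 < h → 1 ≤ K → (∀ n : ℕ, (R n : ℝ) ≤ K * h ^ n) → L ≤ Real.sqrt h)
    (q : ℕ) (hq : 2 ≤ q) (hgrow : ∀ n : ℕ, R n ≤ q ^ n) :
    L = 1 := by
  have hL1 : 1 ≤ L := by
    refine ge_of_tendsto hlim ?_
    filter_upwards with n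
    have h1 : (1:ℝ) ≤ (R n : ℝ) := by exact_mod_cast hR n
    calc (1:ℝ) = 1 ^ (1/(n:ℝ)) := (Real.one_rpow _).symm
      _ ≤ (R n : ℝ) ^ (1/(n:ℝ)) := Real.rpow_le_rpow zero_le_one h1 (by positivity)
  by_contra hne
  have hLgt : 1 < L := lt_of_le_of_ne hL1 (Ne.symm hne)
  set h : ℝ := (L + L^2)/2 with hh
  have hLh : L < h := by nlinarith
  have hhL2 : h < L^2 := by nlinarith
  have h1 : 1 < h := lt_trans hLgt hLh
  have hev : ∀ᶠ n in Filter.atTop, (R n : ℝ) ^ (1/(n:ℝ)) ≤ h :=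
    hlim.eventually (eventually_le_nhds hLh)
  obtain ⟨N, hN⟩ := Filter.eventually_atTop.mp hev
  set K : ℝ := max 1 ((q:ℝ)^N) with hK
  have hK1 : 1 ≤ K := le_max_left _ _
  have hbound : ∀ n : ℕ, (R n : ℝ) ≤ K * h ^ n := by
    intro n
    rcases lt_or_ge n N with hlt | hge
    · have h1' : (R n : ℝ) ≤ (q:ℝ)^n := by exact_mod_cast hgrow n
      have h2 : (q:ℝ)^n ≤ (q:ℝ)^N := by
        apply pow_le_pow_right₀ (by exact_mod_cast le_trans one_le_two hq) (le_of_lt hlt)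
      have h3 : (q:ℝ)^N ≤ K := le_max_right _ _
      have h4 : (1:ℝ) ≤ h ^ n := one_le_pow₀ (le_of_lt h1)
      nlinarith [le_trans (le_trans h1' h2) h3, pow_nonneg (le_of_lt (lt_trans one_pos h1)) n]
    · rcases Nat.eq_zero_or_pos n with rfl | hn
      · simp only [pow_zero, mul_one]
        have : (R 0 : ℝ) ≤ (q:ℝ)^0 := by exact_mod_cast hgrow 0
        simpa using le_trans this hK1
      · have hRn0 : (0:ℝ) ≤ (R n : ℝ) := by positivity
        have heq : ((R n : ℝ) ^ (1/(n:ℝ))) ^ n = (R n : ℝ) := by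
          rw [← Real.rpow_natCast ((R n : ℝ) ^ (1/(n:ℝ))) n, ← Real.rpow_mul hRn0]
          rw [one_div, inv_mul_cancel₀ (by positivity : (n:ℝ) ≠ 0)]
          exact Real.rpow_one _
        have hle : (R n : ℝ) ≤ h ^ n := by
          rw [← heq]
          exact pow_le_pow_left₀ (by positivity) (hN n hge) n
        calc (R n : ℝ) ≤ h ^ n := hle
          _ ≤ K * h ^ n := le_mul_of_one_le_left (by positivity) hK1
  have hcon : L ≤ Real.sqrt h := hkey h K h1 hK1 hbound
  have : Real.sqrt h < L := by
    have := Real.sqrt_lt_sqrt (le_of_lt (lt_trans one_pos h1)) hhL2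
    rwa [Real.sqrt_sq (by linarith)] at this
  linarith
end
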